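/- Let μ₀ and μ₁ be Borel probability measures on ℝ with finite first moment. Then the Kantorovich duality formula holds: W_1(μ₀,μ₁) = sup over all bounded Lipschitz functions φ : ℝ → ℝ with positive Lipschitz constant of (1/Lip(φ)) · (∫_ℝ φ dμ₁ − ∫_ℝ φ dμ₀), where Lip(φ) denotes the Lipschitz constant of φ. -/

import Mathlib

/-!
Any coupling `π` and any `φ` with Lipschitz constant `L` give
`∫ φ dμ₁ - ∫ φ dμ₀ = ∫ (φ y - φ x) dπ ≤ L ∫ |x - y| dπ`, so the supremum is at most `W₁`.

Conversely, couple `μ₀` and `μ₁` monotonically through their quantile functions `q₀, q₁` on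
`(0, 1)`. Between `q₀ u` and `q₁ u` the distribution functions `F₀, F₁` are strictly ordered,
with `F₁ < F₀` exactly when `q₀ u < q₁ u`. Hence the primitive `φ_N` of the function that is `1`
where `F₁ < F₀` and `-1` elsewhere, cut off outside `[-N, N]` so that `φ_N` is bounded, is
`1`-Lipschitz and satisfies `φ_N (q₁ u) - φ_N (q₀ u) = |q₀ u - q₁ u|` once `N ≥ |q₀ u|, |q₁ u|`.
By dominated convergence `∫ φ_N dμ₁ - ∫ φ_N dμ₀` tends to the cost of the quantile coupling,
which bounds `W₁` from above.
-/

open MeasureTheory Set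

/-- A coupling of two Borel probability measures on `ℝ` is a measure on `ℝ × ℝ`
whose first marginal is `μ` and whose second marginal is `ν`. -/
def IsCoupling (μ ν : Measure ℝ) (π : Measure (ℝ × ℝ)) : Prop :=
  π.map Prod.fst = μ ∧ π.map Prod.snd = ν

/-- The `1`-Wasserstein distance, defined as the infimum of transport costs over couplings. -/
noncomputable def W1 (μ ν : Measure ℝ) : ℝ :=
  ⨅ π : {π : Measure (ℝ × ℝ) // IsCoupling μ ν π}, ∫ q, |q.1 - q.2| ∂(π.1)

/-- The (optimal) Lipschitz constant of a function `φ : ℝ → ℝ`. -/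
noncomputable def lipConst (φ : ℝ → ℝ) : ℝ :=
  sInf {L : ℝ | 0 ≤ L ∧ LipschitzWith (Real.toNNReal L) φ}

open Filter ProbabilityTheory
open scoped Topology

section LipConst

variable {φ : ℝ → ℝ} {K : NNReal}

lemma lipConst_le (h : LipschitzWith K φ) : lipConst φ ≤ K :=
  csInf_le ⟨0, fun _ hL => hL.1⟩ ⟨K.coe_nonneg, by rwa [Real.toNNReal_coe]⟩

lemma lipschitzWith_lipConst (h : LipschitzWith K φ) :
    LipschitzWith (lipConst φ).toNNReal φ := by
  have hne : {L : ℝ | 0 ≤ L ∧ LipschitzWith L.toNNReal φ}.Nonempty :=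
    ⟨K, K.coe_nonneg, by rwa [Real.toNNReal_coe]⟩
  have h0 : 0 ≤ lipConst φ := le_csInf hne fun _ hL => hL.1
  refine LipschitzWith.of_dist_le_mul fun x y => ?_
  rw [Real.coe_toNNReal _ h0]
  rcases (dist_nonneg : 0 ≤ dist x y).eq_or_lt with hxy | hxy
  · rw [dist_eq_zero.1 hxy.symm, dist_self, dist_self, mul_zero]
  · rw [← div_le_iff₀ hxy]
    refine le_csInf hne fun L hL => (div_le_iff₀ hxy).2 ?_
    simpa [Real.coe_toNNReal _ hL.1] using hL.2.dist_le_mul x y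

lemma lipConst_pos (h : LipschitzWith K φ) {a b : ℝ} (hab : φ a ≠ φ b) : 0 < lipConst φ := by
  by_contra! hle
  have := (lipschitzWith_lipConst h).dist_le_mul a b
  rw [Real.toNNReal_of_nonpos hle, NNReal.coe_zero, zero_mul] at this
  exact hab (dist_le_zero.1 this)

lemma lipConst_neg : lipConst (fun x => -φ x) = lipConst φ := by
  simp only [lipConst, lipschitzWith_iff_dist_le_mul, dist_neg_neg]

end LipConst

section Coupling

variable {μ₀ μ₁ : Measure ℝ} {π : Measure (ℝ × ℝ)}

lemma isCoupling_prod [IsProbabilityMeasure μ₀] [IsProbabilityMeasure μ₁] :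
    IsCoupling μ₀ μ₁ (μ₀.prod μ₁) := by
  constructor <;> simp

lemma IsCoupling.isProbabilityMeasure [IsProbabilityMeasure μ₀] (hπ : IsCoupling μ₀ μ₁ π) :
    IsProbabilityMeasure π :=
  ⟨by rw [← preimage_univ (f := Prod.fst), ← Measure.map_apply measurable_fst .univ, hπ.1,
    measure_univ]⟩

lemma IsCoupling.integral_sub_eq [IsProbabilityMeasure μ₀] (hπ : IsCoupling μ₀ μ₁ π) {φ : ℝ → ℝ}
    (hφ : Continuous φ) (hb : ∃ M, ∀ x, |φ x| ≤ M) :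
    (∫ x, φ x ∂μ₁) - ∫ x, φ x ∂μ₀ = ∫ q, (φ q.2 - φ q.1) ∂π := by
  have := hπ.isProbabilityMeasure
  obtain ⟨M, hM⟩ := hb
  have hint {f : ℝ × ℝ → ℝ} (hf : Continuous f) : Integrable (fun q => φ (f q)) π :=
    .of_bound (hφ.comp hf).aestronglyMeasurable M (.of_forall fun q => hM (f q))
  rw [integral_sub (hint continuous_snd) (hint continuous_fst), ← hπ.1, ← hπ.2,
    integral_map measurable_snd.aemeasurable hφ.aestronglyMeasurable,
    integral_map measurable_fst.aemeasurable hφ.aestronglyMeasurable]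

lemma IsCoupling.integrable_cost (hπ : IsCoupling μ₀ μ₁ π) (h₀ : Integrable (fun x => |x|) μ₀)
    (h₁ : Integrable (fun x => |x|) μ₁) : Integrable (fun q : ℝ × ℝ => |q.1 - q.2|) π := by
  have hfst : Integrable (fun q : ℝ × ℝ => |q.1|) π :=
    (integrable_map_measure continuous_abs.aestronglyMeasurable measurable_fst.aemeasurable).1
      (hπ.1 ▸ h₀)
  have hsnd : Integrable (fun q : ℝ × ℝ => |q.2|) π :=
    (integrable_map_measure continuous_abs.aestronglyMeasurable measurable_snd.aemeasurable).1
      (hπ.2 ▸ h₁)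
  refine (hfst.add hsnd).mono' (by fun_prop) (.of_forall fun q => ?_)
  simpa only [Pi.add_apply, Real.norm_eq_abs, abs_abs] using abs_sub q.1 q.2

lemma W1_le_cost (hπ : IsCoupling μ₀ μ₁ π) : W1 μ₀ μ₁ ≤ ∫ q, |q.1 - q.2| ∂π := by
  refine ciInf_le (f := fun π : {π // IsCoupling μ₀ μ₁ π} => ∫ q, |q.1 - q.2| ∂π.1)
    ⟨0, ?_⟩ ⟨π, hπ⟩
  rintro _ ⟨π, rfl⟩
  exact integral_nonneg fun _ => abs_nonneg _

end Coupling

def dualValues (μ₀ μ₁ : Measure ℝ) : Set ℝ :=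
  {r : ℝ | ∃ φ : ℝ → ℝ,
    (∃ K : NNReal, LipschitzWith K φ) ∧
    (∃ M : ℝ, ∀ x, |φ x| ≤ M) ∧
    0 < lipConst φ ∧
    r = (1 / lipConst φ) * ((∫ x, φ x ∂μ₁) - ∫ x, φ x ∂μ₀)}

section DualValues

variable {μ₀ μ₁ : Measure ℝ}

lemma neg_mem_dualValues {r : ℝ} (hr : r ∈ dualValues μ₀ μ₁) : -r ∈ dualValues μ₀ μ₁ := by
  obtain ⟨φ, ⟨K, hK⟩, ⟨M, hM⟩, hpos, rfl⟩ := hr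
  refine ⟨fun x => -φ x, ⟨K, ?_⟩, ⟨M, fun x => by simpa using hM x⟩, by rwa [lipConst_neg], ?_⟩
  · simpa [lipschitzWith_iff_dist_le_mul, dist_neg_neg] using hK
  · rw [lipConst_neg, integral_neg, integral_neg]
    ring

lemma dualValues_nonempty : (dualValues μ₀ μ₁).Nonempty :=
  ⟨_, Real.sin, ⟨1, Real.lipschitzWith_sin⟩, ⟨1, Real.abs_sin_le_one⟩,
    lipConst_pos Real.lipschitzWith_sin (a := 0) (b := Real.pi / 2) (by simp), rfl⟩

lemma le_cost_of_mem_dualValues [IsProbabilityMeasure μ₀] (h₀ : Integrable (fun x => |x|) μ₀)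
    (h₁ : Integrable (fun x => |x|) μ₁) {π : Measure (ℝ × ℝ)} (hπ : IsCoupling μ₀ μ₁ π) {r : ℝ}
    (hr : r ∈ dualValues μ₀ μ₁) : r ≤ ∫ q, |q.1 - q.2| ∂π := by
  obtain ⟨φ, ⟨K, hK⟩, hb, hpos, rfl⟩ := hr
  have hφ : ∀ q : ℝ × ℝ, |φ q.2 - φ q.1| ≤ lipConst φ * |q.1 - q.2| := fun q => by
    simpa [Real.dist_eq, abs_sub_comm, hpos.le] using
      (lipschitzWith_lipConst hK).dist_le_mul q.2 q.1
  have hcost := (hπ.integrable_cost h₀ h₁).const_mul (lipConst φ)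
  have hc := hK.continuous
  rw [one_div, inv_mul_le_iff₀ hpos, hπ.integral_sub_eq hc hb, ← integral_const_mul]
  exact integral_mono (hcost.mono' (by fun_prop) (.of_forall hφ)) hcost
    fun q => (le_abs_self _).trans (hφ q)

variable [IsProbabilityMeasure μ₀] [IsProbabilityMeasure μ₁]

lemma bddAbove_dualValues (h₀ : Integrable (fun x => |x|) μ₀)
    (h₁ : Integrable (fun x => |x|) μ₁) : BddAbove (dualValues μ₀ μ₁) :=
  ⟨_, fun _ => le_cost_of_mem_dualValues h₀ h₁ isCoupling_prod⟩

lemma sSup_dualValues_le_W1 (h₀ : Integrable (fun x => |x|) μ₀)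
    (h₁ : Integrable (fun x => |x|) μ₁) : sSup (dualValues μ₀ μ₁) ≤ W1 μ₀ μ₁ :=
  have : Nonempty {π // IsCoupling μ₀ μ₁ π} := ⟨⟨_, isCoupling_prod⟩⟩
  csSup_le dualValues_nonempty fun _ hr =>
    le_ciInf fun π => le_cost_of_mem_dualValues h₀ h₁ π.2 hr

lemma sSup_dualValues_nonneg (h₀ : Integrable (fun x => |x|) μ₀)
    (h₁ : Integrable (fun x => |x|) μ₁) : 0 ≤ sSup (dualValues μ₀ μ₁) := by
  obtain ⟨r, hr⟩ := dualValues_nonempty (μ₀ := μ₀) (μ₁ := μ₁)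
  have := le_csSup (bddAbove_dualValues h₀ h₁) hr
  have := le_csSup (bddAbove_dualValues h₀ h₁) (neg_mem_dualValues hr)
  linarith

lemma integral_sub_le_sSup_dualValues (h₀ : Integrable (fun x => |x|) μ₀)
    (h₁ : Integrable (fun x => |x|) μ₁) {φ : ℝ → ℝ} (hφ : LipschitzWith 1 φ)
    (hb : ∃ M, ∀ x, |φ x| ≤ M) : (∫ x, φ x ∂μ₁) - ∫ x, φ x ∂μ₀ ≤ sSup (dualValues μ₀ μ₁) := by
  rcases le_or_gt ((∫ x, φ x ∂μ₁) - ∫ x, φ x ∂μ₀) 0 with hd | hd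
  · exact hd.trans (sSup_dualValues_nonneg h₀ h₁)
  obtain ⟨a, b, hab⟩ : ∃ a b, φ a ≠ φ b := by
    by_contra! hconst
    rw [show φ = fun _ => φ 0 from funext fun x => hconst x 0] at hd
    simp at hd
  have hpos := lipConst_pos hφ hab
  have hle : lipConst φ ≤ 1 := by simpa using lipConst_le hφ
  calc (∫ x, φ x ∂μ₁) - ∫ x, φ x ∂μ₀
      ≤ 1 / lipConst φ * ((∫ x, φ x ∂μ₁) - ∫ x, φ x ∂μ₀) :=
        le_mul_of_one_le_left hd.le (one_le_one_div hpos hle)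
    _ ≤ sSup (dualValues μ₀ μ₁) :=
        le_csSup (bddAbove_dualValues h₀ h₁) ⟨φ, ⟨1, hφ⟩, hb, hpos, rfl⟩

end DualValues

-- Junk outside `(0, 1)`, where the set is empty or unbounded below.
noncomputable def quantile (μ : Measure ℝ) (u : ℝ) : ℝ := sInf {x | u ≤ cdf μ x}

instance : IsProbabilityMeasure (volume.restrict (Ioo (0 : ℝ) 1)) :=
  ⟨by simp⟩

section Quantile

variable {μ : Measure ℝ} {u x : ℝ}

lemma bddBelow_quantile_set (hu : 0 < u) : BddBelow {x | u ≤ cdf μ x} := by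
  obtain ⟨y, hy⟩ := ((tendsto_cdf_atBot μ).eventually_lt_const hu).exists
  exact ⟨y, fun x hx => le_of_not_gt fun hxy => (hx.trans (monotone_cdf μ hxy.le)).not_gt hy⟩

lemma quantile_set_nonempty (hu : u < 1) : {x | u ≤ cdf μ x}.Nonempty :=
  ((tendsto_cdf_atTop μ).eventually_const_le hu).exists

lemma le_cdf_quantile (hu : u ∈ Ioo 0 1) : u ≤ cdf μ (quantile μ u) := by
  have hright : Tendsto (cdf μ) (𝓝[>] (quantile μ u)) (𝓝 (cdf μ (quantile μ u))) :=
    ((cdf μ).right_continuous _).mono_left (nhdsWithin_mono _ Ioi_subset_Ici_self)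
  refine ge_of_tendsto hright (eventually_nhdsWithin_of_forall fun x hx => ?_)
  obtain ⟨y, hy, hyx⟩ := (csInf_lt_iff (bddBelow_quantile_set hu.1)
    (quantile_set_nonempty hu.2)).1 hx
  exact hy.trans (monotone_cdf μ hyx.le)

lemma quantile_le_iff (hu : u ∈ Ioo 0 1) : quantile μ u ≤ x ↔ u ≤ cdf μ x :=
  ⟨fun h => (le_cdf_quantile hu).trans (monotone_cdf μ h),
    fun h => csInf_le (bddBelow_quantile_set hu.1) h⟩

lemma aemeasurable_quantile : AEMeasurable (quantile μ) (volume.restrict (Ioo 0 1)) :=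
  aemeasurable_restrict_of_monotoneOn measurableSet_Ioo fun _ ha _ hb hab =>
    csInf_le_csInf (bddBelow_quantile_set ha.1) (quantile_set_nonempty hb.2)
      fun _ hx => hab.trans hx

lemma map_quantile [IsProbabilityMeasure μ] :
    (volume.restrict (Ioo 0 1)).map (quantile μ) = μ := by
  have := Measure.isProbabilityMeasure_map (μ := volume.restrict (Ioo (0 : ℝ) 1))
    (aemeasurable_quantile (μ := μ))
  refine Measure.ext_of_Iic _ _ fun x => ?_
  have hpre : quantile μ ⁻¹' Iic x ∩ Ioo 0 1 = Iic (cdf μ x) ∩ Ioo 0 1 := by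
    ext u
    exact and_congr_left quantile_le_iff
  rw [Measure.map_apply_of_aemeasurable aemeasurable_quantile measurableSet_Iic,
    Measure.restrict_apply' measurableSet_Ioo, hpre,
    measure_congr ((ae_eq_refl _).inter Ioo_ae_eq_Ioc), inter_comm, Ioc_inter_Iic,
    Real.volume_Ioc, min_eq_right (cdf_le_one μ x), sub_zero, ofReal_cdf]

end Quantile

lemma cdf_lt_cdf_of_quantile_lt_of_lt_quantile {μ ν : Measure ℝ} {u r : ℝ} (hu : u ∈ Ioo 0 1)
    (hμ : quantile μ u < r) (hν : r < quantile ν u) : cdf ν r < cdf μ r :=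
  (lt_of_not_ge fun h => ((quantile_le_iff hu).2 h).not_gt hν).trans_le
    ((quantile_le_iff hu).1 hμ.le)

noncomputable def quantileCoupling (μ₀ μ₁ : Measure ℝ) : Measure (ℝ × ℝ) :=
  (volume.restrict (Ioo 0 1)).map fun u => (quantile μ₀ u, quantile μ₁ u)

section QuantileCoupling

variable {μ₀ μ₁ : Measure ℝ}

lemma aemeasurable_quantile_prod :
    AEMeasurable (fun u => (quantile μ₀ u, quantile μ₁ u)) (volume.restrict (Ioo 0 1)) :=
  aemeasurable_quantile.prodMk aemeasurable_quantile

lemma isCoupling_quantileCoupling [IsProbabilityMeasure μ₀] [IsProbabilityMeasure μ₁] :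
    IsCoupling μ₀ μ₁ (quantileCoupling μ₀ μ₁) := by
  constructor <;>
  rw [quantileCoupling, AEMeasurable.map_map_of_aemeasurable (by fun_prop)
    aemeasurable_quantile_prod] <;>
  exact map_quantile

lemma integral_quantileCoupling {f : ℝ × ℝ → ℝ} (hf : Continuous f) :
    ∫ q, f q ∂(quantileCoupling μ₀ μ₁) = ∫ u in Ioo 0 1, f (quantile μ₀ u, quantile μ₁ u) :=
  integral_map aemeasurable_quantile_prod hf.aestronglyMeasurable

end QuantileCoupling

section Primitive

variable {g : ℝ → ℝ}

lemma lipschitzWith_one_intervalIntegral (hg : Integrable g) (hg1 : ∀ r, |g r| ≤ 1) :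
    LipschitzWith 1 fun t => ∫ r in 0..t, g r := by
  refine LipschitzWith.of_dist_le_mul fun a b => ?_
  rw [Real.dist_eq, intervalIntegral.integral_interval_sub_left hg.intervalIntegrable
    hg.intervalIntegrable, NNReal.coe_one, one_mul, Real.dist_eq]
  simpa using intervalIntegral.norm_integral_le_of_norm_le_const fun r _ =>
    (Real.norm_eq_abs (g r)).trans_le (hg1 r)

lemma abs_intervalIntegral_le_integral_abs (hg : Integrable g) (t : ℝ) :
    |∫ r in 0..t, g r| ≤ ∫ r, |g r| := by
  rw [← Real.norm_eq_abs, intervalIntegral.norm_integral_eq_norm_integral_uIoc]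
  exact (norm_integral_le_integral_norm _).trans
    (setIntegral_le_integral hg.norm (.of_forall fun _ => norm_nonneg _))

lemma intervalIntegral_eq_of_eqOn_Ioo {a b c : ℝ} (hab : a ≤ b)
    (h : EqOn g (fun _ => c) (Ioo a b)) :
    ∫ r in a..b, g r = (b - a) * c := by
  rw [intervalIntegral.integral_of_le hab, setIntegral_congr_set Ioo_ae_eq_Ioc.symm,
    setIntegral_congr_fun measurableSet_Ioo h]
  simp [hab]

end Primitive

noncomputable def truncatedCdfSign (μ₀ μ₁ : Measure ℝ) (N : ℕ) : ℝ → ℝ :=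
  (Icc (-(N : ℝ)) N).indicator fun r => if cdf μ₁ r < cdf μ₀ r then 1 else -1

noncomputable def dualPotential (μ₀ μ₁ : Measure ℝ) (N : ℕ) (t : ℝ) : ℝ :=
  ∫ r in 0..t, truncatedCdfSign μ₀ μ₁ N r

section DualPotential

variable {μ₀ μ₁ : Measure ℝ} {N : ℕ}

lemma abs_truncatedCdfSign_le_one (r : ℝ) : |truncatedCdfSign μ₀ μ₁ N r| ≤ 1 := by
  rw [truncatedCdfSign, indicator_apply]
  split_ifs <;> norm_num

lemma integrable_truncatedCdfSign : Integrable (truncatedCdfSign μ₀ μ₁ N) := by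
  refine (integrable_indicator_iff measurableSet_Icc).2
    (Integrable.of_bound ?_ 1 (.of_forall fun r => ?_))
  · exact (Measurable.ite (measurableSet_lt (monotone_cdf μ₁).measurable
      (monotone_cdf μ₀).measurable) measurable_const measurable_const).aestronglyMeasurable
  · split_ifs <;> simp

lemma lipschitzWith_dualPotential : LipschitzWith 1 (dualPotential μ₀ μ₁ N) :=
  lipschitzWith_one_intervalIntegral integrable_truncatedCdfSign abs_truncatedCdfSign_le_one

lemma exists_abs_dualPotential_le : ∃ M, ∀ t, |dualPotential μ₀ μ₁ N t| ≤ M :=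
  ⟨_, abs_intervalIntegral_le_integral_abs integrable_truncatedCdfSign⟩

lemma dualPotential_quantile_sub_quantile {u : ℝ} (hu : u ∈ Ioo 0 1)
    (h₀ : |quantile μ₀ u| ≤ N) (h₁ : |quantile μ₁ u| ≤ N) :
    dualPotential μ₀ μ₁ N (quantile μ₁ u) - dualPotential μ₀ μ₁ N (quantile μ₀ u) =
      |quantile μ₀ u - quantile μ₁ u| := by
  set a := quantile μ₀ u
  set b := quantile μ₁ u
  obtain ⟨ha, ha'⟩ := abs_le.1 h₀
  obtain ⟨hb, hb'⟩ := abs_le.1 h₁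
  rw [dualPotential, dualPotential, intervalIntegral.integral_interval_sub_left
    integrable_truncatedCdfSign.intervalIntegrable integrable_truncatedCdfSign.intervalIntegrable]
  rcases le_total a b with hab | hba
  · rw [intervalIntegral_eq_of_eqOn_Ioo hab (c := 1), abs_sub_comm,
      abs_of_nonneg (sub_nonneg.2 hab), mul_one]
    intro r hr
    rw [truncatedCdfSign, indicator_of_mem (mem_Icc.2 ⟨by linarith [hr.1], by linarith [hr.2]⟩),
      if_pos (cdf_lt_cdf_of_quantile_lt_of_lt_quantile hu hr.1 hr.2)]
  · rw [intervalIntegral.integral_symm, intervalIntegral_eq_of_eqOn_Ioo hba (c := -1),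
      abs_of_nonneg (sub_nonneg.2 hba)]
    · ring
    intro r hr
    rw [truncatedCdfSign, indicator_of_mem (mem_Icc.2 ⟨by linarith [hr.1], by linarith [hr.2]⟩),
      if_neg (cdf_lt_cdf_of_quantile_lt_of_lt_quantile hu hr.1 hr.2).not_gt]

end DualPotential

lemma tendsto_integral_sub_dualPotential {μ₀ μ₁ : Measure ℝ} [IsProbabilityMeasure μ₀]
    [IsProbabilityMeasure μ₁] (h₀ : Integrable (fun x => |x|) μ₀)
    (h₁ : Integrable (fun x => |x|) μ₁) :
    Tendsto (fun N : ℕ => (∫ x, dualPotential μ₀ μ₁ N x ∂μ₁) - ∫ x, dualPotential μ₀ μ₁ N x ∂μ₀)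
      atTop (𝓝 (∫ q, |q.1 - q.2| ∂(quantileCoupling μ₀ μ₁))) := by
  have hπ : IsCoupling μ₀ μ₁ (quantileCoupling μ₀ μ₁) := isCoupling_quantileCoupling
  have hφ (N : ℕ) : Continuous (dualPotential μ₀ μ₁ N) := lipschitzWith_dualPotential.continuous
  have hdiff (N : ℕ) : (∫ x, dualPotential μ₀ μ₁ N x ∂μ₁) - ∫ x, dualPotential μ₀ μ₁ N x ∂μ₀ =
      ∫ u in Ioo 0 1, dualPotential μ₀ μ₁ N (quantile μ₁ u) -
        dualPotential μ₀ μ₁ N (quantile μ₀ u) := by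
    rw [hπ.integral_sub_eq (hφ N) exists_abs_dualPotential_le,
      integral_quantileCoupling (by fun_prop)]
  refine Tendsto.congr (fun N => (hdiff N).symm) ?_
  rw [integral_quantileCoupling (by fun_prop)]
  refine tendsto_integral_of_dominated_convergence (fun u => |quantile μ₀ u - quantile μ₁ u|)
    (fun N => ?_) ?_ (fun N => .of_forall fun u => ?_) ?_
  · exact (((hφ N).measurable.comp_aemeasurable aemeasurable_quantile).sub
      ((hφ N).measurable.comp_aemeasurable aemeasurable_quantile)).aestronglyMeasurable
  · exact (integrable_map_measure (by fun_prop) aemeasurable_quantile_prod).1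
      (hπ.integrable_cost h₀ h₁)
  · simpa [Real.dist_eq, abs_sub_comm] using
      lipschitzWith_dualPotential.dist_le_mul (quantile μ₁ u) (quantile μ₀ u)
  · refine ae_restrict_of_forall_mem measurableSet_Ioo fun u hu => tendsto_const_nhds.congr' ?_
    filter_upwards [eventually_ge_atTop ⌈max |quantile μ₀ u| |quantile μ₁ u|⌉₊] with N hN
    have hmax : max |quantile μ₀ u| |quantile μ₁ u| ≤ N := Nat.ceil_le.1 hN
    exact (dualPotential_quantile_sub_quantile hu (le_of_max_le_left hmax)
      (le_of_max_le_right hmax)).symm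

/-- Kantorovich duality: for probability measures `μ₀, μ₁` on `ℝ` with finite first moment,
`W₁(μ₀, μ₁)` is the supremum over all bounded Lipschitz `φ` with positive Lipschitz constant
of `(1 / Lip(φ)) * (∫ φ dμ₁ - ∫ φ dμ₀)`. -/
theorem kantorovich_duality (μ₀ μ₁ : Measure ℝ)
    [IsProbabilityMeasure μ₀] [IsProbabilityMeasure μ₁]
    (h₀ : Integrable (fun x => |x|) μ₀) (h₁ : Integrable (fun x => |x|) μ₁) :
    W1 μ₀ μ₁ = sSup {r : ℝ | ∃ φ : ℝ → ℝ,
      (∃ K : NNReal, LipschitzWith K φ) ∧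
      (∃ M : ℝ, ∀ x, |φ x| ≤ M) ∧
      0 < lipConst φ ∧
      r = (1 / lipConst φ) * ((∫ x, φ x ∂μ₁) - ∫ x, φ x ∂μ₀)} := by
  change W1 μ₀ μ₁ = sSup (dualValues μ₀ μ₁)
  refine le_antisymm ?_ (sSup_dualValues_le_W1 h₀ h₁)
  calc W1 μ₀ μ₁ ≤ ∫ q, |q.1 - q.2| ∂(quantileCoupling μ₀ μ₁) :=
        W1_le_cost isCoupling_quantileCoupling
    _ ≤ sSup (dualValues μ₀ μ₁) :=
        le_of_tendsto' (tendsto_integral_sub_dualPotential h₀ h₁) fun _ =>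
          integral_sub_le_sSup_dualValues h₀ h₁ lipschitzWith_dualPotential
            exists_abs_dualPotential_le
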